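/- Let Σ=(Γ,σ) be a connected signed graph with an orientation ω compatible with σ, let G be a finite additive abelian group, and let B be a connected basis of Σ. Then the restriction map sending a G-tension f of Σ to its restriction f|_B : B → G is a bijection between the set of G-tensions of Σ and the set of all functions B → G; in particular, a G-tension of Σ is uniquely determined by its values on the edges of a connected basis. -/

import Mathlib

attribute [local instance] Classical.propDecidable

noncomputable section SignedGraphs

/-- A signed graph: a multigraph with ordered pairs of endpoints (the order is
an artefact of the encoding) together with a sign `±1` on each edge. -/
structure SGraph (V : Type*) (E : Type*) where
  ends : E → V × V
  sign : E → ℤˣ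

namespace SGraph

variable {V E : Type*}

/-- Endpoint of `e` on side `b`; a loop has both endpoints equal, but its two
half-edges are distinguished by the side `b`. -/
def endpt (Γ : SGraph V E) (e : E) (b : Bool) : V :=
  cond b (Γ.ends e).1 (Γ.ends e).2

/-- `e` is a loop of the underlying graph. -/
def IsLoop (Γ : SGraph V E) (e : E) : Prop := (Γ.ends e).1 = (Γ.ends e).2

/-- Walks in a signed multigraph: a step traverses an edge `e` in direction `d`
(from the side-`d` endpoint to the other endpoint). -/
inductive Walk (Γ : SGraph V E) : V → V → Type _
  | nil (v : V) : Walk Γ v v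
  | cons (e : E) (d : Bool) {w : V} (p : Walk Γ (Γ.endpt e (!d)) w) : Walk Γ (Γ.endpt e d) w

namespace Walk

variable {Γ : SGraph V E}

/-- The list of vertices visited by a walk (including the final one). -/
def verts : ∀ {u v : V}, Γ.Walk u v → List V
  | _, _, .nil x => [x]
  | _, _, .cons e d p => Γ.endpt e d :: p.verts

/-- The list of edges traversed by a walk. -/
def edges : ∀ {u v : V}, Γ.Walk u v → List E
  | _, _, .nil _ => []
  | _, _, .cons e _ p => e :: p.edges

/-- The list of (edge, direction) steps of a walk. -/
def steps : ∀ {u v : V}, Γ.Walk u v → List (E × Bool)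
  | _, _, .nil _ => []
  | _, _, .cons e d p => (e, d) :: p.steps

/-- The sources of the steps of a walk, i.e. all visited vertices except the last. -/
def srcs {u v : V} (W : Γ.Walk u v) : List V := W.verts.dropLast

/-- The sign of a walk: the product of the signs of its edges. -/
def sgn : ∀ {u v : V}, Γ.Walk u v → ℤˣ
  | _, _, .nil _ => 1
  | _, _, .cons e _ p => Γ.sign e * p.sgn

/-- Concatenation of walks. -/
def append : ∀ {u v w : V}, Γ.Walk u v → Γ.Walk v w → Γ.Walk u w
  | _, _, _, .nil _, q => q
  | _, _, _, .cons e d p, q => .cons e d (p.append q)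

/-- The sum `Σᵢ f(eᵢ)` of the values of `f` on the edges of the walk,
with multiplicity. -/
def edgeSum {G : Type*} [AddCommGroup G] (f : E → G) {u v : V} (W : Γ.Walk u v) : G :=
  (W.edges.map f).sum

/-- The sum `Σᵢ ω(vᵢ,eᵢ)·(Π_{j<i} σ(eⱼ))·f(eᵢ)` along a walk, where `ω(vᵢ,eᵢ)`
is the value of `ω` on the half-edge by which the walk leaves `vᵢ`. -/
def tensionSum {G : Type*} [AddCommGroup G] (ω : E → Bool → ℤˣ) (f : E → G) :
    ∀ {u v : V}, Γ.Walk u v → G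
  | _, _, .nil _ => 0
  | _, _, .cons e d p => ((ω e d : ℤ) • f e) + ((Γ.sign e : ℤ) • tensionSum ω f p)

/-- `Q` is the reverse of the walk `P`. -/
def IsReverseOf {u v : V} (Q : Γ.Walk v u) (P : Γ.Walk u v) : Prop :=
  Q.steps = P.steps.reverse.map fun s => (s.1, !s.2)

end Walk

/-- A closed walk is a cycle if it is nontrivial, visits no vertex twice and
uses no edge twice. -/
def IsCycle (Γ : SGraph V E) {v : V} (W : Γ.Walk v v) : Prop :=
  W.edges ≠ [] ∧ W.srcs.Nodup ∧ W.edges.Nodup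

/-- A balanced (positive) cycle. -/
def IsBalancedCycle (Γ : SGraph V E) {v : V} (W : Γ.Walk v v) : Prop :=
  Γ.IsCycle W ∧ W.sgn = 1

/-- An unbalanced (negative) cycle. -/
def IsUnbalancedCycle (Γ : SGraph V E) {v : V} (W : Γ.Walk v v) : Prop :=
  Γ.IsCycle W ∧ W.sgn = -1

/-- A nontrivial walk that is a simple path (all visited vertices distinct). -/
def IsPathWalk (Γ : SGraph V E) {u v : V} (P : Γ.Walk u v) : Prop :=
  P.edges ≠ [] ∧ P.verts.Nodup

/-- A tight handcuff at `v`: two edge-disjoint unbalanced cycles sharing exactly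
the vertex `v`. -/
def IsTightHandcuff (Γ : SGraph V E) {v : V} (C₁ C₂ : Γ.Walk v v) : Prop :=
  Γ.IsUnbalancedCycle C₁ ∧ Γ.IsUnbalancedCycle C₂ ∧
    (∀ x ∈ C₁.srcs, x ∈ C₂.srcs → x = v) ∧ ∀ e ∈ C₁.edges, e ∉ C₂.edges

/-- A loose handcuff: two vertex-disjoint unbalanced cycles `C₁` (at `u`) and
`C₂` (at `w`) joined by a simple path `P` from `u` to `w` meeting the cycles
exactly in its endpoints. -/
def IsLooseHandcuff (Γ : SGraph V E) {u w : V} (C₁ : Γ.Walk u u) (P : Γ.Walk u w)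
    (C₂ : Γ.Walk w w) : Prop :=
  Γ.IsUnbalancedCycle C₁ ∧ Γ.IsUnbalancedCycle C₂ ∧ Γ.IsPathWalk P ∧
    (∀ x ∈ C₁.srcs, x ∉ C₂.srcs) ∧
    (∀ x ∈ P.verts, x ∈ C₁.srcs → x = u) ∧
    (∀ x ∈ P.verts, x ∈ C₂.srcs → x = w) ∧
    ∀ e ∈ P.edges, e ∉ C₁.edges ∧ e ∉ C₂.edges

/-- The canonical closed walks traversing a circuit of the signed graph:
a balanced cycle, a tight handcuff `C₁ * C₂`, or a loose handcuff
`C₁ * P * C₂ * P⁻¹` (the circuit path edges being used twice). -/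
def IsBasicCircuitWalk (Γ : SGraph V E) {v : V} (W : Γ.Walk v v) : Prop :=
  Γ.IsBalancedCycle W ∨
    (∃ C₁ C₂ : Γ.Walk v v, Γ.IsTightHandcuff C₁ C₂ ∧ W = C₁.append C₂) ∨
    ∃ (w : V) (C₁ : Γ.Walk v v) (P : Γ.Walk v w) (C₂ : Γ.Walk w w) (Q : Γ.Walk w v),
      Γ.IsLooseHandcuff C₁ P C₂ ∧ Q.IsReverseOf P ∧
        W = C₁.append (P.append (C₂.append Q))

/-- A circuit walk: a rotation of a basic circuit walk. -/
def IsCircuitWalk (Γ : SGraph V E) {v : V} (W : Γ.Walk v v) : Prop :=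
  ∃ (u : V) (A : Γ.Walk u v) (B : Γ.Walk v u),
    W = B.append A ∧ Γ.IsBasicCircuitWalk (A.append B)

/-- `e` is a circuit path edge: it lies on the connecting path of an unbalanced
loose handcuff. -/
def IsCircuitPathEdge (Γ : SGraph V E) (e : E) : Prop :=
  ∃ (u w : V) (C₁ : Γ.Walk u u) (P : Γ.Walk u w) (C₂ : Γ.Walk w w),
    Γ.IsLooseHandcuff C₁ P C₂ ∧ e ∈ P.edges

/-- Adjacency via an edge. -/
def Adj (Γ : SGraph V E) (a b : V) : Prop := ∃ e, Γ.ends e = (a, b) ∨ Γ.ends e = (b, a)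

/-- The set of connected components. -/
def Components (Γ : SGraph V E) : Type _ := Quot Γ.Adj

/-- The connected component of a vertex. -/
def comp (Γ : SGraph V E) (v : V) : Γ.Components := Quot.mk _ v

/-- The number `k(Γ)` of connected components. -/
def kAll (Γ : SGraph V E) : ℕ := Nat.card Γ.Components

/-- A connected component is balanced if every cycle it contains is balanced. -/
def IsBalancedComponent (Γ : SGraph V E) (c : Γ.Components) : Prop :=
  ∀ v : V, Γ.comp v = c → ∀ W : Γ.Walk v v, Γ.IsCycle W → W.sgn = 1

/-- The number `k_b(Σ)` of balanced connected components. -/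
def kb (Γ : SGraph V E) : ℕ := Nat.card {c : Γ.Components // Γ.IsBalancedComponent c}

/-- The number `k_u(Σ)` of unbalanced connected components. -/
def ku (Γ : SGraph V E) : ℕ := Nat.card {c : Γ.Components // ¬ Γ.IsBalancedComponent c}

/-- A signed graph is balanced if all its cycles are balanced. -/
def Balanced (Γ : SGraph V E) : Prop :=
  ∀ (v : V) (W : Γ.Walk v v), Γ.IsCycle W → W.sgn = 1

/-- A signed graph is connected if it has exactly one connected component. -/
def Connected (Γ : SGraph V E) : Prop := Γ.kAll = 1

/-- The spanning subgraph `Σ \ Aᶜ` with edge set `A`. -/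
def restrict (Γ : SGraph V E) (A : Set E) : SGraph V A :=
  { ends := fun e => Γ.ends e, sign := fun e => Γ.sign e }

/-- The signed Tutte polynomial (as a function of `x`, `y`, `z`):
`T_Σ(X,Y,Z) = Σ_{A⊆E} (X−1)^{k(Σ\Aᶜ)−k(Σ)} (Y−1)^{|A|−|V|+k_b(Σ\Aᶜ)} (Z−1)^{k_u(Σ\Aᶜ)}`. -/
def signedTutte {K : Type*} [CommRing K] (Γ : SGraph V E) (x y z : K) : K :=
  ∑ᶠ A : Finset E,
    (x - 1) ^ ((Γ.restrict (A : Set E)).kAll - Γ.kAll) *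
      (y - 1) ^ ((A.card + (Γ.restrict (A : Set E)).kb) - Nat.card V) *
        (z - 1) ^ (Γ.restrict (A : Set E)).ku

/-- Deletion of an edge. -/
def deleteEdge (Γ : SGraph V E) (e : E) : SGraph V {e' : E // e' ≠ e} :=
  { ends := fun e' => Γ.ends e'.1, sign := fun e' => Γ.sign e'.1 }

/-- The relation identifying the two endpoints of `e`. -/
def contractRel (Γ : SGraph V E) (e : E) (a b : V) : Prop := (a, b) = Γ.ends e

/-- Contraction of an edge: the two endpoints are identified and the edge is
deleted.  (For a loop this is just deletion, as the identification is trivial.) -/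
def contract (Γ : SGraph V E) (e : E) : SGraph (Quot (Γ.contractRel e)) {e' : E // e' ≠ e} :=
  { ends := fun e' => (Quot.mk _ (Γ.ends e'.1).1, Quot.mk _ (Γ.ends e'.1).2),
    sign := fun e' => Γ.sign e'.1 }

/-- `e` is a bridge: its deletion increases the number of connected components. -/
def IsBridge (Γ : SGraph V E) (e : E) : Prop := Γ.kAll < (Γ.deleteEdge e).kAll

/-- An orientation of the half-edges, compatible with the signature. -/
def IsCompatible (Γ : SGraph V E) (ω : E → Bool → ℤˣ) : Prop :=
  ∀ e, Γ.sign e = -(ω e true * ω e false)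

/-- A `G`-flow: Kirchhoff's law holds at every vertex. -/
def IsFlow (Γ : SGraph V E) (ω : E → Bool → ℤˣ) {G : Type*} [AddCommGroup G]
    (f : E → G) : Prop :=
  ∀ v : V,
    (∑ᶠ e : E, ((if Γ.endpt e true = v then (ω e true : ℤ) • f e else 0) +
      (if Γ.endpt e false = v then (ω e false : ℤ) • f e else 0))) = 0

/-- A `G`-tension: the alternating sum along every circuit walk vanishes. -/
def IsTension (Γ : SGraph V E) (ω : E → Bool → ℤˣ) {G : Type*} [AddCommGroup G]
    (f : E → G) : Prop :=
  ∀ (v : V) (W : Γ.Walk v v), Γ.IsCircuitWalk W → W.tensionSum ω f = 0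

end SGraph

/-- The doubling homomorphism `x ↦ x + x = 2x` of an abelian group. -/
def doubleHom (G : Type*) [AddCommGroup G] : G →+ G :=
  AddMonoidHom.mk' (fun x => x + x) (fun a b => add_add_add_comm a b a b)

/-- The subgroup `2G = {2x : x ∈ G}`. -/
def twoG (G : Type*) [AddCommGroup G] : AddSubgroup G := (doubleHom G).range

/-- The `2`-torsion subgroup `G₂ = {x ∈ G : 2x = 0}`. -/
def torsion2 (G : Type*) [AddCommGroup G] : AddSubgroup G := (doubleHom G).ker

namespace SGraph

variable {V E : Type*}

/-- A `G`-potential difference: a `G`-tension whose sum around every unbalanced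
cycle lies in `2G`. -/
def IsPotentialDifference (Γ : SGraph V E) (ω : E → Bool → ℤˣ) {G : Type*} [AddCommGroup G]
    (f : E → G) : Prop :=
  Γ.IsTension ω f ∧
    ∀ (v : V) (W : Γ.Walk v v), Γ.IsUnbalancedCycle W → W.edgeSum f ∈ twoG G

end SGraph

namespace SGraph

variable {V E : Type*}

/-- Proper coloring by elements of a set `X` with involution `ι`: adjacent
endpoints of a positive edge get different colors, and for a negative edge the
`ι`-image of one endpoint's color differs from the other endpoint's color. -/
def IsProperInvColoring (Γ : SGraph V E) {X : Type*} (ι : X → X) (f : V → X) : Prop :=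
  ∀ e : E, (Γ.sign e = 1 → f ((Γ.ends e).1) ≠ f ((Γ.ends e).2)) ∧
    (Γ.sign e = -1 → ι (f ((Γ.ends e).1)) ≠ f ((Γ.ends e).2))

/-- A proper `G`-coloring: for every edge `e = uv`, `f(u) ≠ f(v)` if `e` is
positive and `-f(u) ≠ f(v)` if `e` is negative, i.e. `σ(e)•f(u) ≠ f(v)`. -/
def IsProperColoring (Γ : SGraph V E) {G : Type*} [AddCommGroup G] (f : V → G) : Prop :=
  ∀ e : E, ((Γ.sign e : ℤ) • f ((Γ.ends e).1)) ≠ f ((Γ.ends e).2)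

/-- Zaslavsky's proper `n`-coloring: colors in `{0, ±1, …, ±n}` with
`f(u) ≠ σ(e)·f(v)` for every edge `e = uv`. -/
def IsProperNColoring (Γ : SGraph V E) (n : ℕ) (f : V → ℤ) : Prop :=
  (∀ v, |f v| ≤ (n : ℤ)) ∧
    ∀ e : E, f ((Γ.ends e).1) ≠ (Γ.sign e : ℤ) * f ((Γ.ends e).2)

/-- `T ⊆ E` is a spanning tree: the spanning subgraph `(V,T)` is connected and
contains no cycle. -/
def IsSpanningTree (Γ : SGraph V E) (T : Set E) : Prop :=
  (Γ.restrict T).Connected ∧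
    ∀ (v : V) (W : (Γ.restrict T).Walk v v), ¬ (Γ.restrict T).IsCycle W

/-- A connected basis of a connected signed graph: a spanning tree if `Σ` is
balanced; otherwise a spanning tree plus one extra edge closing an unbalanced
cycle. -/
def IsConnectedBasis (Γ : SGraph V E) (B : Set E) : Prop :=
  (Γ.Balanced ∧ Γ.IsSpanningTree B) ∨
    (¬ Γ.Balanced ∧ ∃ (T : Set E) (e : E), Γ.IsSpanningTree T ∧ e ∉ T ∧ B = insert e T ∧
      ∀ (v : V) (W : (Γ.restrict B).Walk v v), (Γ.restrict B).IsCycle W → W.sgn = -1)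

/-- Switching at a vertex `v`: the sign of every non-loop edge incident with `v`
is negated; loops keep their sign. -/
def switchAt (Γ : SGraph V E) (v : V) : SGraph V E :=
  { ends := Γ.ends,
    sign := fun e => if ((Γ.ends e).1 = v ↔ (Γ.ends e).2 = v) then Γ.sign e else -Γ.sign e }

/-- Switching at a set `S` of vertices (the composite of the switchings at the
vertices of `S`): the sign of an edge is negated iff exactly one of its
endpoints lies in `S`. -/
def switchSet (Γ : SGraph V E) (S : Set V) : SGraph V E :=
  { ends := Γ.ends,
    sign := fun e => if ((Γ.ends e).1 ∈ S ↔ (Γ.ends e).2 ∈ S) then Γ.sign e else -Γ.sign e }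

/-- Isomorphism of signed graphs (as undirected signed multigraphs). -/
def Iso {V₁ E₁ V₂ E₂ : Type*} (Γ₁ : SGraph V₁ E₁) (Γ₂ : SGraph V₂ E₂) : Prop :=
  ∃ (φ : V₁ ≃ V₂) (ψ : E₁ ≃ E₂), ∀ e : E₁,
    (Γ₂.ends (ψ e) = (φ (Γ₁.ends e).1, φ (Γ₁.ends e).2) ∨
      Γ₂.ends (ψ e) = (φ (Γ₁.ends e).2, φ (Γ₁.ends e).1)) ∧
    Γ₂.sign (ψ e) = Γ₁.sign e

/-- Switching equivalence: isomorphism after switching at a set of vertices. -/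
def SwitchEquiv {V₁ E₁ V₂ E₂ : Type*} (Γ₁ : SGraph V₁ E₁) (Γ₂ : SGraph V₂ E₂) : Prop :=
  ∃ S : Set V₁, Iso (Γ₁.switchSet S) Γ₂

/-- Disjoint union of signed graphs. -/
def disjUnion {V₁ E₁ V₂ E₂ : Type*} (Γ₁ : SGraph V₁ E₁) (Γ₂ : SGraph V₂ E₂) :
    SGraph (V₁ ⊕ V₂) (E₁ ⊕ E₂) where
  ends := fun e => match e with
    | .inl e => (Sum.inl (Γ₁.ends e).1, Sum.inl (Γ₁.ends e).2)
    | .inr e => (Sum.inr (Γ₂.ends e).1, Sum.inr (Γ₂.ends e).2)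
  sign := fun e => match e with
    | .inl e => Γ₁.sign e
    | .inr e => Γ₂.sign e

/-- The difference operator `δ : G^V → G^E`,
`(δg)(e) = ω(v,e)·g(v) + ω(u,e)·g(u)` for `e = uv`. -/
def deltaHom (Γ : SGraph V E) (ω : E → Bool → ℤˣ) (G : Type*) [AddCommGroup G] :
    (V → G) →+ (E → G) :=
  AddMonoidHom.mk'
    (fun g e => (ω e true : ℤ) • g ((Γ.ends e).1) + (ω e false : ℤ) • g ((Γ.ends e).2))
    (by
      intro a b
      funext e
      simp only [Pi.add_apply, smul_add]
      abel)

end SGraph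

end SignedGraphs

/-!
A tension `f` vanishing on the connected basis `B` vanishes on every other edge `e`, since `e`
lies on a circuit whose other edges are in `B`, and the sum of `f` along a circuit walk through
`e` is `±f e`. The circuit is the fundamental cycle `C` of `e` in the spanning tree `T ⊆ B` when
`C` is balanced. Otherwise let `C₀` be the unbalanced cycle of `B`. If `C` meets `C₀`, the ear of
`C` through `e` either returns to the vertex of `C₀` it leaves (a balanced cycle or a tight
handcuff) or joins two vertices of `C₀`, and is closed into a balanced cycle by one of the two
arcs of `C₀`, which have opposite signs. If `C` and `C₀` are disjoint, a tree path joins them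
into a loose handcuff.

Conversely, for `h : V → G` and `c : G`, the sum of `δh` plus `c` on the negative edges (suitably
oriented) along a walk `W` from `u` to `v` telescopes to `h u - σ(W) h v + [σ(W) = -1] c`, so
these are tensions. Integrating given values along tree walks yields an `h` reproducing them on
`T`: a closed walk in a forest has sign `1` and sum `0`, because the two traversals of an edge act
by mutually inverse affine maps and a closed walk without cycles cancels by backtracking. The
constant `c` then fixes the value on the edge of `B` outside `T`.
-/

namespace SGraph

variable {V E : Type*} {Γ : SGraph V E} {G : Type*} [AddCommGroup G] {ω : E → Bool → ℤˣ}

namespace Walk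

variable {u v w x : V}

@[simp] lemma verts_nil : (nil x : Γ.Walk x x).verts = [x] := rfl
@[simp] lemma verts_cons (e : E) (d : Bool) (p : Γ.Walk (Γ.endpt e (!d)) w) :
    (cons e d p).verts = Γ.endpt e d :: p.verts := rfl
@[simp] lemma edges_nil : (nil x : Γ.Walk x x).edges = [] := rfl
@[simp] lemma edges_cons (e : E) (d : Bool) (p : Γ.Walk (Γ.endpt e (!d)) w) :
    (cons e d p).edges = e :: p.edges := rfl
@[simp] lemma steps_cons (e : E) (d : Bool) (p : Γ.Walk (Γ.endpt e (!d)) w) :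
    (cons e d p).steps = (e, d) :: p.steps := rfl
@[simp] lemma sgn_nil : (nil x : Γ.Walk x x).sgn = 1 := rfl
@[simp] lemma sgn_cons (e : E) (d : Bool) (p : Γ.Walk (Γ.endpt e (!d)) w) :
    (cons e d p).sgn = Γ.sign e * p.sgn := rfl
@[simp] lemma nil_append (W : Γ.Walk x v) : (nil x).append W = W := rfl
@[simp] lemma cons_append (e : E) (d : Bool) (p : Γ.Walk (Γ.endpt e (!d)) w)
    (W : Γ.Walk w v) : (cons e d p).append W = cons e d (p.append W) := rfl
@[simp] lemma tensionSum_nil (f : E → G) : (nil v : Γ.Walk v v).tensionSum ω f = 0 := rfl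
@[simp] lemma tensionSum_cons (f : E → G) (e : E) (d : Bool) (p : Γ.Walk (Γ.endpt e (!d)) w) :
    (cons e d p).tensionSum ω f = (ω e d : ℤ) • f e + (Γ.sign e : ℤ) • p.tensionSum ω f :=
  rfl

lemma verts_ne_nil (W : Γ.Walk u v) : W.verts ≠ [] := by
  cases W <;> simp

@[simp] lemma srcs_nil : (nil x : Γ.Walk x x).srcs = [] := rfl
@[simp] lemma srcs_cons (e : E) (d : Bool) (p : Γ.Walk (Γ.endpt e (!d)) w) :
    (cons e d p).srcs = Γ.endpt e d :: p.srcs :=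
  List.dropLast_cons_of_ne_nil p.verts_ne_nil

lemma verts_eq_srcs_append (W : Γ.Walk u v) : W.verts = W.srcs ++ [v] := by
  induction W with
  | nil => rfl
  | cons e d p ih => simp [ih]

lemma edges_append (W₁ : Γ.Walk u v) (W₂ : Γ.Walk v w) :
    (W₁.append W₂).edges = W₁.edges ++ W₂.edges := by
  induction W₁ with
  | nil => rfl
  | cons e d p ih => simp [ih]

lemma steps_append (W₁ : Γ.Walk u v) (W₂ : Γ.Walk v w) :
    (W₁.append W₂).steps = W₁.steps ++ W₂.steps := by
  induction W₁ with
  | nil => rfl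
  | cons e d p ih => simp [ih]

lemma verts_append (W₁ : Γ.Walk u v) (W₂ : Γ.Walk v w) :
    (W₁.append W₂).verts = W₁.srcs ++ W₂.verts := by
  induction W₁ with
  | nil => rfl
  | cons e d p ih => simp [ih]

lemma srcs_append (W₁ : Γ.Walk u v) (W₂ : Γ.Walk v w) :
    (W₁.append W₂).srcs = W₁.srcs ++ W₂.srcs := by
  induction W₁ with
  | nil => rfl
  | cons e d p ih => simp [ih]

lemma sgn_append (W₁ : Γ.Walk u v) (W₂ : Γ.Walk v w) :
    (W₁.append W₂).sgn = W₁.sgn * W₂.sgn := by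
  induction W₁ with
  | nil => simp
  | cons e d p ih => simp [ih, mul_assoc]

lemma tensionSum_append (f : E → G) (W₁ : Γ.Walk u v) (W₂ : Γ.Walk v w) :
    (W₁.append W₂).tensionSum ω f = W₁.tensionSum ω f + (W₁.sgn : ℤ) • W₂.tensionSum ω f := by
  induction W₁ with
  | nil => simp
  | cons e d p ih => simp [ih, smul_add, smul_smul, add_assoc]

lemma append_assoc (W₁ : Γ.Walk u v) (W₂ : Γ.Walk v w) (W₃ : Γ.Walk w x) :
    (W₁.append W₂).append W₃ = W₁.append (W₂.append W₃) := by
  induction W₁ with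
  | nil => rfl
  | cons e d p ih => simp [ih]

lemma append_nil (W : Γ.Walk u v) : W.append (nil v) = W := by
  induction W with
  | nil => rfl
  | cons e d p ih => simp [ih]

lemma start_mem_verts (W : Γ.Walk u v) : u ∈ W.verts := by
  cases W <;> simp

lemma end_mem_verts (W : Γ.Walk u v) : v ∈ W.verts := by
  simp [verts_eq_srcs_append]

lemma mem_verts_of_mem_srcs {W : Γ.Walk u v} (h : x ∈ W.srcs) : x ∈ W.verts := by
  simp [verts_eq_srcs_append, h]

lemma start_mem_srcs {W : Γ.Walk u v} (h : W.edges ≠ []) : u ∈ W.srcs := by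
  cases W <;> simp_all

lemma edges_ne_nil_of_mem_srcs {W : Γ.Walk u v} (h : x ∈ W.srcs) : W.edges ≠ [] := by
  cases W <;> simp_all

lemma mem_srcs_of_mem_verts {W : Γ.Walk u u} (hW : W.edges ≠ []) (h : x ∈ W.verts) :
    x ∈ W.srcs := by
  rw [verts_eq_srcs_append, List.mem_append, List.mem_singleton] at h
  exact h.elim id fun h => h ▸ start_mem_srcs hW

lemma mem_verts_append_left {W₁ : Γ.Walk u v} {W₂ : Γ.Walk v w} (h : x ∈ W₁.verts) :
    x ∈ (W₁.append W₂).verts := by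
  rw [verts_eq_srcs_append, List.mem_append, List.mem_singleton] at h
  rw [verts_append, List.mem_append]
  exact h.imp id fun h : x = v => h ▸ W₂.start_mem_verts

lemma mem_verts_append_right {W₁ : Γ.Walk u v} {W₂ : Γ.Walk v w} (h : x ∈ W₂.verts) :
    x ∈ (W₁.append W₂).verts := by
  rw [verts_append]
  exact List.mem_append_right _ h

lemma endpt_mem_verts {W : Γ.Walk u v} {e : E} (he : e ∈ W.edges) (d : Bool) :
    Γ.endpt e d ∈ W.verts := by
  induction W with
  | nil => simp at he
  | cons e' d' p ih =>
    rcases List.mem_cons.1 he with rfl | h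
    · cases d <;> cases d' <;>
        first | exact List.mem_cons_self | exact List.mem_cons_of_mem _ p.start_mem_verts
    · simp [ih h]

lemma eq_of_edges_eq_nil {W : Γ.Walk u v} (h : W.edges = []) : u = v := by
  cases W with
  | nil => rfl
  | cons => simp at h

lemma nodup_verts_iff {W : Γ.Walk u v} : W.verts.Nodup ↔ W.srcs.Nodup ∧ v ∉ W.srcs := by
  rw [verts_eq_srcs_append, List.nodup_append]
  simpa using fun _ => ⟨fun h hv => h v hv rfl, fun h a ha hav => h (hav ▸ ha)⟩

lemma nodup_edges_of_nodup_verts {W : Γ.Walk u v} (h : W.verts.Nodup) : W.edges.Nodup := by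
  induction W with
  | nil => simp
  | cons e d p ih =>
    rw [verts_cons, List.nodup_cons] at h
    exact List.nodup_cons.2 ⟨fun he => h.1 (endpt_mem_verts he d), ih h.2⟩

lemma edges_eq_nil_of_nodup_verts (W : Γ.Walk u v) (huv : u = v) (h : W.verts.Nodup) :
    W.edges = [] := by
  subst huv
  cases W with
  | nil => rfl
  | cons e d p => simpa using (List.nodup_cons.1 h).1 p.end_mem_verts

lemma tensionSum_congr {f g : E → G} {W : Γ.Walk u v} (h : ∀ e ∈ W.edges, f e = g e) :
    W.tensionSum ω f = W.tensionSum ω g := by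
  induction W with
  | nil => rfl
  | cons e d p ih => simp_all

lemma tensionSum_eq_zero {f : E → G} {W : Γ.Walk u v} (h : ∀ e ∈ W.edges, f e = 0) :
    W.tensionSum ω f = 0 := by
  induction W with
  | nil => rfl
  | cons e d p ih => simp_all

lemma tensionSum_add (f g : E → G) (W : Γ.Walk u v) :
    W.tensionSum ω (f + g) = W.tensionSum ω f + W.tensionSum ω g := by
  induction W with
  | nil => simp
  | cons e d p ih =>
    simp only [tensionSum_cons, ih, Pi.add_apply, smul_add]
    abel

lemma tensionSum_sub (f g : E → G) (W : Γ.Walk u v) :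
    W.tensionSum ω (f - g) = W.tensionSum ω f - W.tensionSum ω g := by
  induction W with
  | nil => simp
  | cons e d p ih =>
    simp only [tensionSum_cons, ih, Pi.sub_apply, smul_sub]
    abel

lemma exists_eq_append_cons_of_mem_edges {W : Γ.Walk u v} {e : E} (he : e ∈ W.edges) :
    ∃ (d : Bool) (W₁ : Γ.Walk u (Γ.endpt e d)) (W₂ : Γ.Walk (Γ.endpt e (!d)) v),
      W = W₁.append (cons e d W₂) := by
  induction W with
  | nil => simp at he
  | cons e' d' p ih =>
    by_cases h : e' = e
    · subst h
      exact ⟨d', nil _, p, rfl⟩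
    · obtain ⟨d, W₁, W₂, rfl⟩ := ih (by simpa [Ne.symm h] using he)
      exact ⟨d, cons e' d' W₁, W₂, rfl⟩

lemma exists_eq_append_first (p : V → Prop) {W : Γ.Walk u v} (h : ∃ x ∈ W.verts, p x) :
    ∃ (x : V) (W₁ : Γ.Walk u x) (W₂ : Γ.Walk x v),
      W = W₁.append W₂ ∧ p x ∧ ∀ y ∈ W₁.srcs, ¬ p y := by
  induction W with
  | nil z =>
    obtain ⟨x, hx, hpx⟩ := h
    rw [verts_nil, List.mem_singleton] at hx
    subst hx
    exact ⟨_, nil _, nil _, rfl, hpx, by simp⟩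
  | cons e d q ih =>
    by_cases hp : p (Γ.endpt e d)
    · exact ⟨_, nil _, cons e d q, rfl, hp, by simp⟩
    · obtain ⟨x, W₁, W₂, rfl, hx, hW₁⟩ := ih (by simpa [hp] using h)
      exact ⟨x, cons e d W₁, W₂, rfl, hx, by simpa [hp] using hW₁⟩

lemma exists_eq_append_last (p : V → Prop) {W : Γ.Walk u v} (h : ∃ x ∈ W.verts, p x) :
    ∃ (x : V) (W₁ : Γ.Walk u x) (W₂ : Γ.Walk x v),
      W = W₁.append W₂ ∧ p x ∧ ∀ y ∈ W₂.verts, p y → y = x := by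
  induction W with
  | nil z =>
    obtain ⟨x, hx, hpx⟩ := h
    rw [verts_nil, List.mem_singleton] at hx
    subst hx
    exact ⟨_, nil _, nil _, rfl, hpx, by simp⟩
  | cons e d q ih =>
    by_cases hq : ∃ x ∈ q.verts, p x
    · obtain ⟨x, W₁, W₂, rfl, hx, hW₂⟩ := ih hq
      exact ⟨x, cons e d W₁, W₂, rfl, hx, hW₂⟩
    · push Not at hq
      have hmem : ∀ y ∈ (cons e d q).verts, p y → y = Γ.endpt e d := fun y hy hpy =>
        (List.mem_cons.1 hy).resolve_right fun hy => hq y hy hpy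
      obtain ⟨y, hy, hpy⟩ := h
      exact ⟨_, nil _, cons e d q, rfl, hmem y hy hpy ▸ hpy, hmem⟩

lemma exists_eq_append_closed_of_not_nodup_srcs {W : Γ.Walk u v} (h : ¬ W.srcs.Nodup) :
    ∃ (x : V) (W₁ : Γ.Walk u x) (L : Γ.Walk x x) (W₂ : Γ.Walk x v),
      W = W₁.append (L.append W₂) ∧ L.edges ≠ [] ∧ W₂.edges ≠ [] := by
  induction W with
  | nil => simp at h
  | cons e d q ih =>
    rw [srcs_cons, List.nodup_cons, not_and_or, not_not] at h
    rcases h with h | h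
    · obtain ⟨x, A, B, rfl, rfl, hA⟩ :=
        exists_eq_append_first (· = Γ.endpt e d) ⟨_, mem_verts_of_mem_srcs h, rfl⟩
      rw [srcs_append, List.mem_append] at h
      exact ⟨_, nil _, cons e d A, B, rfl, by simp,
        edges_ne_nil_of_mem_srcs (h.resolve_left fun h' => hA _ h' rfl)⟩
    · obtain ⟨x, W₁, L, W₂, rfl, hL, hW₂⟩ := ih h
      exact ⟨x, cons e d W₁, L, W₂, rfl, hL, hW₂⟩

lemma exists_eq_append_cons_append_cons_of_not_nodup_edges {W : Γ.Walk u v}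
    (h : ¬ W.edges.Nodup) : ∃ (e : E) (d d' : Bool) (W₁ : Γ.Walk u (Γ.endpt e d))
      (W₂ : Γ.Walk (Γ.endpt e (!d)) (Γ.endpt e d')) (W₃ : Γ.Walk (Γ.endpt e (!d')) v),
      W = W₁.append (cons e d (W₂.append (cons e d' W₃))) := by
  induction W with
  | nil => simp at h
  | cons e d q ih =>
    rw [edges_cons, List.nodup_cons, not_and_or, not_not] at h
    rcases h with h | h
    · obtain ⟨d', W₂, W₃, rfl⟩ := exists_eq_append_cons_of_mem_edges h
      exact ⟨e, d, d', nil _, W₂, W₃, rfl⟩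
    · obtain ⟨e', d₁, d₂, W₁, W₂, W₃, rfl⟩ := ih h
      exact ⟨e', d₁, d₂, cons e d W₁, W₂, W₃, rfl⟩

/-- The one-step walk `cons e (!d) (nil _)`, typed with endpoint `Γ.endpt e d` rather than
`Γ.endpt e (!!d)`. -/
def reverseStep (e : E) : ∀ d : Bool, Γ.Walk (Γ.endpt e (!d)) (Γ.endpt e d)
  | true => cons e false (nil _)
  | false => cons e true (nil _)

@[simp] lemma steps_reverseStep (e : E) (d : Bool) :
    (reverseStep (Γ := Γ) e d).steps = [(e, !d)] := by
  cases d <;> rfl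
@[simp] lemma edges_reverseStep (e : E) (d : Bool) :
    (reverseStep (Γ := Γ) e d).edges = [e] := by
  cases d <;> rfl
@[simp] lemma verts_reverseStep (e : E) (d : Bool) :
    (reverseStep (Γ := Γ) e d).verts = [Γ.endpt e (!d), Γ.endpt e d] := by
  cases d <;> rfl

lemma exists_backtrack_of_not_nodup_edges {W : Γ.Walk u v} (hs : W.srcs.Nodup)
    (hE : ¬ W.edges.Nodup) : ∃ (e : E) (d : Bool) (W₁ : Γ.Walk u (Γ.endpt e d))
      (L : Γ.Walk (Γ.endpt e (!d)) (Γ.endpt e (!d))) (W₂ : Γ.Walk (Γ.endpt e d) v),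
      W = W₁.append (cons e d (L.append ((reverseStep e d).append W₂))) := by
  obtain ⟨e, d, d', W₁, L, W₂, rfl⟩ := exists_eq_append_cons_append_cons_of_not_nodup_edges hE
  simp only [srcs_append, srcs_cons] at hs
  cases d <;> cases d'
  · exact absurd (List.nodup_cons.1 hs.of_append_right).1 (by simp)
  · exact ⟨e, false, W₁, L, W₂, rfl⟩
  · exact ⟨e, true, W₁, L, W₂, rfl⟩
  · exact absurd (List.nodup_cons.1 hs.of_append_right).1 (by simp)

def reverse : ∀ {u v : V}, Γ.Walk u v → Γ.Walk v u
  | _, _, nil x => nil x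
  | _, _, cons e d p => p.reverse.append (reverseStep e d)

lemma reverse_cons (e : E) (d : Bool) (p : Γ.Walk (Γ.endpt e (!d)) w) :
    (cons e d p).reverse = p.reverse.append (reverseStep e d) := rfl

lemma steps_reverse (W : Γ.Walk u v) :
    W.reverse.steps = W.steps.reverse.map fun s => (s.1, !s.2) := by
  induction W with
  | nil => rfl
  | cons e d p ih => simp [reverse_cons, steps_append, ih]

lemma isReverseOf_reverse (W : Γ.Walk u v) : W.reverse.IsReverseOf W :=
  steps_reverse W

lemma edges_reverse (W : Γ.Walk u v) : W.reverse.edges = W.edges.reverse := by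
  induction W with
  | nil => rfl
  | cons e d p ih => simp [reverse_cons, edges_append, ih]

lemma verts_reverse (W : Γ.Walk u v) : W.reverse.verts = W.verts.reverse := by
  induction W with
  | nil => rfl
  | cons e d p ih =>
    have h := verts_eq_srcs_append p.reverse
    rw [ih] at h
    simp [reverse_cons, verts_append, h]

lemma sgn_eq_prod (W : Γ.Walk u v) : W.sgn = (W.edges.map Γ.sign).prod := by
  induction W with
  | nil => rfl
  | cons e d p ih => simp [ih]

lemma edges_eq_map_steps (W : Γ.Walk u v) : W.edges = W.steps.map Prod.fst := by
  induction W with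
  | nil => rfl
  | cons e d p ih => simp [ih]

lemma IsReverseOf.edges_eq {P : Γ.Walk u v} {Q : Γ.Walk v u} (h : Q.IsReverseOf P) :
    Q.edges = P.edges.reverse := by
  rw [edges_eq_map_steps, edges_eq_map_steps, show Q.steps = _ from h]
  simp [List.map_reverse]

lemma IsReverseOf.sgn_eq {P : Γ.Walk u v} {Q : Γ.Walk v u} (h : Q.IsReverseOf P) :
    Q.sgn = P.sgn := by
  rw [sgn_eq_prod, sgn_eq_prod, h.edges_eq, List.map_reverse, List.prod_reverse]

end Walk

def IsAcyclicOn (Γ : SGraph V E) (A : Set E) : Prop :=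
  ∀ (v : V) (W : Γ.Walk v v), (∀ e ∈ W.edges, e ∈ A) → ¬ Γ.IsCycle W

namespace Walk

variable {u v w : V} {M : Type*} [Monoid M] {φ : E → Bool → M}

def prodSteps (φ : E → Bool → M) : ∀ {u v : V}, Γ.Walk u v → M
  | _, _, nil _ => 1
  | _, _, cons e d p => φ e d * p.prodSteps φ

@[simp] lemma prodSteps_nil : (nil v : Γ.Walk v v).prodSteps φ = 1 := rfl
@[simp] lemma prodSteps_cons (e : E) (d : Bool) (p : Γ.Walk (Γ.endpt e (!d)) w) :
    (cons e d p).prodSteps φ = φ e d * p.prodSteps φ := rfl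
@[simp] lemma prodSteps_reverseStep (e : E) (d : Bool) :
    (reverseStep (Γ := Γ) e d).prodSteps φ = φ e (!d) := by
  cases d <;> simp [reverseStep]

lemma prodSteps_append (W₁ : Γ.Walk u v) (W₂ : Γ.Walk v w) :
    (W₁.append W₂).prodSteps φ = W₁.prodSteps φ * W₂.prodSteps φ := by
  induction W₁ with
  | nil => simp
  | cons e d p ih => simp [ih, mul_assoc]

lemma prodSteps_eq_one_of_edges_eq_nil {W : Γ.Walk u v} (h : W.edges = []) :
    W.prodSteps φ = 1 := by
  cases W <;> simp_all

lemma prodSteps_reverse_mul (hφ : ∀ e d, φ e d * φ e (!d) = 1) (W : Γ.Walk u v) :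
    W.reverse.prodSteps φ * W.prodSteps φ = 1 := by
  induction W with
  | nil => simp [reverse]
  | cons e d p ih =>
    have h := hφ e (!d)
    rw [Bool.not_not] at h
    rw [reverse_cons, prodSteps_append, prodSteps_reverseStep, prodSteps_cons, mul_assoc,
      ← mul_assoc (φ e _), h, one_mul, ih]

theorem prodSteps_eq_one_of_isAcyclicOn (hφ : ∀ e d, φ e d * φ e (!d) = 1) {A : Set E}
    (hA : Γ.IsAcyclicOn A) (W : Γ.Walk v v) (hWA : ∀ e ∈ W.edges, e ∈ A) :
    W.prodSteps φ = 1 := by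
  induction hn : W.edges.length using Nat.strong_induction_on generalizing v W with
  | _ n ih =>
  by_cases hs : W.srcs.Nodup
  · by_cases hE : W.edges.Nodup
    · by_cases h0 : W.edges = []
      · exact prodSteps_eq_one_of_edges_eq_nil h0
      · exact absurd ⟨h0, hs, hE⟩ (hA v W hWA)
    obtain ⟨e, d, W₁, L, W₂, rfl⟩ := exists_backtrack_of_not_nodup_edges hs hE
    simp only [edges_append, edges_cons, edges_reverseStep, List.mem_append, List.mem_cons,
      List.length_append, List.length_cons] at hWA hn
    have hL : L.prodSteps φ = 1 :=
      ih _ (by simp at hn; omega) L (fun e' h => hWA e' (by simp [h])) rfl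
    have hW : (W₁.append W₂).prodSteps φ = 1 :=
      ih _ (by simp [edges_append] at hn ⊢; omega) _
        (fun e' h => hWA e' (by simp only [edges_append, List.mem_append] at h; tauto)) rfl
    rw [prodSteps_append] at hW
    simp [prodSteps_append, hL, ← mul_assoc, hφ e d, hW]
  · obtain ⟨x, W₁, L, W₂, rfl, hL, hW₂⟩ := exists_eq_append_closed_of_not_nodup_srcs hs
    simp only [edges_append, List.mem_append, List.length_append] at hWA hn
    have hL1 : L.prodSteps φ = 1 :=
      ih _ (by have := List.length_pos_iff.2 hW₂; omega) L (fun e' h => hWA e' (by tauto)) rfl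
    have hW : (W₁.append W₂).prodSteps φ = 1 :=
      ih _ (by have := List.length_pos_iff.2 hL; simp [edges_append]; omega) _
        (fun e' h => hWA e' (by simp only [edges_append, List.mem_append] at h; tauto)) rfl
    rw [prodSteps_append] at hW
    rw [prodSteps_append, prodSteps_append, hL1, one_mul, hW]

theorem prodSteps_eq_of_isAcyclicOn (hφ : ∀ e d, φ e d * φ e (!d) = 1) {A : Set E}
    (hA : Γ.IsAcyclicOn A) (W W' : Γ.Walk u v) (hW : ∀ e ∈ W.edges, e ∈ A)
    (hW' : ∀ e ∈ W'.edges, e ∈ A) : W.prodSteps φ = W'.prodSteps φ := by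
  have h := prodSteps_eq_one_of_isAcyclicOn hφ hA (W.append W'.reverse) fun e he => by
    rw [edges_append, edges_reverse, List.mem_append, List.mem_reverse] at he
    exact he.elim (hW e) (hW' e)
  rw [prodSteps_append] at h
  calc W.prodSteps φ = W.prodSteps φ * (W'.reverse.prodSteps φ * W'.prodSteps φ) := by
        rw [prodSteps_reverse_mul hφ, mul_one]
    _ = W'.prodSteps φ := by rw [← mul_assoc, h, one_mul]

lemma sgn_eq_prodSteps (W : Γ.Walk u v) : W.sgn = W.prodSteps fun e _ => Γ.sign e := by
  induction W with
  | nil => rfl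
  | cons e d p ih => simp [ih]

lemma sgn_eq_of_isAcyclicOn {A : Set E} (hA : Γ.IsAcyclicOn A) (W W' : Γ.Walk u v)
    (hW : ∀ e ∈ W.edges, e ∈ A) (hW' : ∀ e ∈ W'.edges, e ∈ A) : W.sgn = W'.sgn := by
  simpa only [← sgn_eq_prodSteps] using prodSteps_eq_of_isAcyclicOn (φ := fun e _ => Γ.sign e)
    (fun e _ => Int.units_mul_self _) hA W W' hW hW'

end Walk

open Walk

lemma IsCompatible.orient_mul_orient_not (hω : Γ.IsCompatible ω) (e : E) (d : Bool) :
    ω e d * ω e (!d) = -Γ.sign e := by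
  cases d <;> simp [hω e, mul_comm]

lemma IsCompatible.sign_mul_orient_not (hω : Γ.IsCompatible ω) (e : E) (d : Bool) :
    Γ.sign e * ω e (!d) = -ω e d := by
  rw [← neg_neg (Γ.sign e), ← hω.orient_mul_orient_not e d, neg_mul, mul_assoc,
    Int.units_mul_self, mul_one]

/-- The affine map by which a step along `e` in direction `d` acts on the tension sum of the rest
of the walk. -/
def tensionStep (Γ : SGraph V E) (ω : E → Bool → ℤˣ) (f : E → G) (e : E) (d : Bool) :
    Function.End G :=
  fun x => (ω e d : ℤ) • f e + (Γ.sign e : ℤ) • x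

lemma tensionStep_mul_tensionStep_not (hω : Γ.IsCompatible ω) (f : E → G) (e : E) (d : Bool) :
    Γ.tensionStep ω f e d * Γ.tensionStep ω f e (!d) = 1 := by
  refine funext fun x => ?_
  change (ω e d : ℤ) • f e + (Γ.sign e : ℤ) • ((ω e (!d) : ℤ) • f e + (Γ.sign e : ℤ) • x) = x
  rw [smul_add, smul_smul, smul_smul, ← Units.val_mul, ← Units.val_mul,
    hω.sign_mul_orient_not, Int.units_mul_self]
  simp

lemma Walk.tensionSum_eq_prodSteps (f : E → G) {u v : V} (W : Γ.Walk u v) :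
    W.tensionSum ω f = W.prodSteps (Γ.tensionStep ω f) 0 := by
  induction W with
  | nil => rfl
  | cons e d p ih =>
    rw [tensionSum_cons, ih]
    rfl

lemma Walk.tensionSum_eq_of_isAcyclicOn (hω : Γ.IsCompatible ω) (f : E → G) {A : Set E}
    (hA : Γ.IsAcyclicOn A) {u v : V} (W W' : Γ.Walk u v) (hW : ∀ e ∈ W.edges, e ∈ A)
    (hW' : ∀ e ∈ W'.edges, e ∈ A) : W.tensionSum ω f = W'.tensionSum ω f := by
  rw [tensionSum_eq_prodSteps, tensionSum_eq_prodSteps,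
    prodSteps_eq_of_isAcyclicOn (tensionStep_mul_tensionStep_not hω f) hA W W' hW hW']

lemma sgn_eq_one_of_isCircuitWalk {v : V} {W : Γ.Walk v v} (h : Γ.IsCircuitWalk W) :
    W.sgn = 1 := by
  obtain ⟨u, A, B, rfl, hAB⟩ := h
  rw [sgn_append, mul_comm, ← sgn_append]
  rcases hAB with hbal | ⟨C₁, C₂, hC, hAB⟩ | ⟨w, C₁, P, C₂, Q, hC, hQ, hAB⟩
  · exact hbal.2
  · rw [hAB, sgn_append, hC.1.2, hC.2.1.2]
    rfl
  · rw [hAB, sgn_append, sgn_append, sgn_append, hC.1.2, hC.2.1.2, hQ.sgn_eq]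
    rcases Int.units_eq_one_or P.sgn with h | h <;> rw [h] <;> rfl

lemma IsTension.sub {f g : E → G} (hf : Γ.IsTension ω f) (hg : Γ.IsTension ω g) :
    Γ.IsTension ω (f - g) := fun v W hW => by
  rw [tensionSum_sub, hf v W hW, hg v W hW, sub_zero]

lemma orient_smul_deltaHom (hω : Γ.IsCompatible ω) (h : V → G) (e : E) (d : Bool) :
    (ω e d : ℤ) • Γ.deltaHom ω G h e
      = h (Γ.endpt e d) - (Γ.sign e : ℤ) • h (Γ.endpt e (!d)) := by
  have hd : ω e true * ω e false = -Γ.sign e := by rw [hω e, neg_neg]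
  cases d <;> simp [deltaHom, endpt, smul_add, smul_smul, ← Units.val_mul,
    mul_comm (ω e false), hd, sub_eq_add_neg, add_comm]

lemma tensionSum_deltaHom (hω : Γ.IsCompatible ω) (h : V → G) {u v : V} (W : Γ.Walk u v) :
    W.tensionSum ω (Γ.deltaHom ω G h) = h u - (W.sgn : ℤ) • h v := by
  induction W with
  | nil => simp
  | cons e d p ih =>
    rw [tensionSum_cons, ih, orient_smul_deltaHom hω, sgn_cons, Units.val_mul, smul_sub,
      smul_smul]
    abel

def negTension (Γ : SGraph V E) (ω : E → Bool → ℤˣ) (c : G) : E → G :=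
  fun e => if Γ.sign e = 1 then 0 else (ω e true : ℤ) • c

lemma tensionSum_negTension (hω : Γ.IsCompatible ω) (c : G) {u v : V} (W : Γ.Walk u v) :
    W.tensionSum ω (Γ.negTension ω c) = if W.sgn = 1 then 0 else c := by
  induction W with
  | nil => simp
  | cons e d p ih =>
    rcases Int.units_eq_one_or (Γ.sign e) with hσ | hσ
    · simp [negTension, hσ, ih]
    · have hd : ω e d * ω e true = 1 := by
        cases d
        · simpa [hσ, mul_comm] using hω.orient_mul_orient_not e false
        · exact Int.units_mul_self _
      rcases Int.units_eq_one_or p.sgn with hp | hp <;>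
        simp [negTension, hσ, ih, hp, smul_smul, ← Units.val_mul, hd]

lemma isTension_deltaHom_add_negTension (hω : Γ.IsCompatible ω) (h : V → G) (c : G) :
    Γ.IsTension ω (Γ.deltaHom ω G h + Γ.negTension ω c) := fun v W hW => by
  rw [tensionSum_add, tensionSum_deltaHom hω, tensionSum_negTension hω,
    sgn_eq_one_of_isCircuitWalk hW]
  simp

def walkPotential (ω : E → Bool → ℤˣ) {r : V} (P : ∀ v, Γ.Walk r v) (f : E → G) (v : V) :
    G :=
  -((P v).sgn : ℤ) • (P v).tensionSum ω f

section Potential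

variable {T : Set E} {r : V} {P : ∀ v, Γ.Walk r v}

lemma walkPotential_root (hω : Γ.IsCompatible ω) (hT : Γ.IsAcyclicOn T)
    (hP : ∀ v, ∀ e ∈ (P v).edges, e ∈ T) (f : E → G) : walkPotential ω P f r = 0 := by
  have h := tensionSum_eq_of_isAcyclicOn hω f hT (P r) (nil r) (hP r) (by simp)
  simp [walkPotential, h]

lemma deltaHom_walkPotential (hω : Γ.IsCompatible ω) (hT : Γ.IsAcyclicOn T)
    (hP : ∀ v, ∀ e ∈ (P v).edges, e ∈ T) (f : E → G) {e : E} (he : e ∈ T) :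
    Γ.deltaHom ω G (walkPotential ω P f) e = f e := by
  set u := Γ.endpt e true
  have hW : ∀ e' ∈ ((P u).append (cons e true (nil _))).edges, e' ∈ T := by
    intro e' h'
    rw [edges_append, List.mem_append, edges_cons, edges_nil, List.mem_singleton] at h'
    exact h'.elim (hP u e') (· ▸ he)
  have hs := sgn_eq_of_isAcyclicOn hT (P (Γ.endpt e false)) _ (hP _) hW
  have ht := tensionSum_eq_of_isAcyclicOn hω f hT (P (Γ.endpt e false)) _ (hP _) hW
  rw [sgn_append, sgn_cons, sgn_nil, mul_one] at hs
  rw [tensionSum_append, tensionSum_cons, tensionSum_nil, smul_zero, add_zero] at ht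
  change (ω e true : ℤ) • walkPotential ω P f u
    + (ω e false : ℤ) • walkPotential ω P f (Γ.endpt e false) = f e
  simp only [walkPotential, hs, ht]
  have hσ := hω e
  rcases Int.units_eq_one_or (ω e true) with h1 | h1 <;>
    rcases Int.units_eq_one_or (ω e false) with h2 | h2 <;>
      rcases Int.units_eq_one_or (P u).sgn with h3 | h3 <;>
        simp [hσ, h1, h2, h3, smul_add]

end Potential

namespace Walk

variable {A : Set E} {u v : V}

def ofRestrict : ∀ {u v : V}, (Γ.restrict A).Walk u v → Γ.Walk u v
  | _, _, nil x => nil x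
  | _, _, cons e d p => cons e.1 d (ofRestrict p)

lemma mem_of_mem_edges_ofRestrict (W : (Γ.restrict A).Walk u v) :
    ∀ e ∈ (ofRestrict W).edges, e ∈ A := by
  induction W with
  | nil => simp [ofRestrict]
  | cons e d p ih =>
    intro e' he'
    rcases List.mem_cons.1 he' with rfl | he'
    exacts [e.2, ih e' he']

def toRestrict : ∀ {u v : V} (W : Γ.Walk u v), (∀ e ∈ W.edges, e ∈ A) →
    (Γ.restrict A).Walk u v
  | _, _, nil x, _ => nil x
  | _, _, cons e d p, h =>
      cons (Γ := Γ.restrict A) ⟨e, h e List.mem_cons_self⟩ d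
        (toRestrict p fun e' he' => h e' (List.mem_cons_of_mem _ he'))

lemma verts_toRestrict (W : Γ.Walk u v) (h : ∀ e ∈ W.edges, e ∈ A) :
    (toRestrict W h).verts = W.verts := by
  induction W with
  | nil => rfl
  | cons e d p ih => exact congrArg (Γ.endpt e d :: ·) (ih _)

lemma edges_toRestrict (W : Γ.Walk u v) (h : ∀ e ∈ W.edges, e ∈ A) :
    (toRestrict W h).edges.map Subtype.val = W.edges := by
  induction W with
  | nil => rfl
  | cons e d p ih => exact congrArg (e :: ·) (ih _)

lemma sgn_toRestrict (W : Γ.Walk u v) (h : ∀ e ∈ W.edges, e ∈ A) :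
    (toRestrict W h).sgn = W.sgn := by
  induction W with
  | nil => rfl
  | cons e d p ih => exact congrArg (Γ.sign e * ·) (ih _)

lemma isCycle_toRestrict {W : Γ.Walk v v} (h : ∀ e ∈ W.edges, e ∈ A) (hW : Γ.IsCycle W) :
    (Γ.restrict A).IsCycle (toRestrict W h) := by
  have he := edges_toRestrict W h
  refine ⟨fun h0 => hW.1 (by rw [← he, h0]; rfl), ?_, ?_⟩
  · rw [srcs, verts_toRestrict]
    exact hW.2.1
  · exact List.Nodup.of_map Subtype.val (he ▸ hW.2.2)

lemma exists_nodup_verts (W : Γ.Walk u v) :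
    ∃ P : Γ.Walk u v, P.verts.Nodup ∧ ∀ e ∈ P.edges, e ∈ W.edges := by
  induction W with
  | nil x => exact ⟨nil x, by simp, by simp⟩
  | cons e d p ih =>
    obtain ⟨q, hq, hqp⟩ := ih
    by_cases hmem : Γ.endpt e d ∈ q.verts
    · obtain ⟨x, q₁, q₂, rfl, rfl, -⟩ :=
        exists_eq_append_first (· = Γ.endpt e d) ⟨_, hmem, rfl⟩
      rw [verts_append] at hq
      exact ⟨q₂, hq.of_append_right, fun e' he' =>
        List.mem_cons_of_mem _ (hqp e' (by simp [edges_append, he']))⟩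
    · exact ⟨cons e d q, List.nodup_cons.2 ⟨hmem, hq⟩, fun e' he' => by
        rcases List.mem_cons.1 he' with rfl | he'
        · exact List.mem_cons_self
        · exact List.mem_cons_of_mem _ (hqp e' he')⟩

end Walk

lemma Connected.nonempty (h : Γ.Connected) : Nonempty V :=
  have : Nonempty Γ.Components := ((Nat.card_eq_one_iff_unique).1 h).2
  ⟨(Quot.exists_rep (Classical.arbitrary Γ.Components)).choose⟩

lemma Connected.nonempty_walk (h : Γ.Connected) (u v : V) : Nonempty (Γ.Walk u v) := by
  have : Subsingleton Γ.Components := ((Nat.card_eq_one_iff_unique).1 h).1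
  suffices ∀ a b, Relation.EqvGen Γ.Adj a b → Nonempty (Γ.Walk a b) from
    this u v (Quot.eqvGen_exact (Subsingleton.elim (Γ.comp u) (Γ.comp v)))
  intro a b hab
  induction hab with
  | rel a b hab =>
    obtain ⟨e, h | h⟩ := hab
    · exact ⟨cast (by simp [endpt, h]) (cons (Γ := Γ) e true (nil _))⟩
    · exact ⟨cast (by simp [endpt, h]) (cons (Γ := Γ) e false (nil _))⟩
  | refl a => exact ⟨nil a⟩
  | symm a b _ ih => exact ⟨ih.some.reverse⟩
  | trans a b c _ _ ih₁ ih₂ => exact ⟨ih₁.some.append ih₂.some⟩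

namespace IsSpanningTree

variable {T : Set E}

lemma isAcyclicOn (hT : Γ.IsSpanningTree T) : Γ.IsAcyclicOn T :=
  fun v W hW hC => hT.2 v (toRestrict W hW) (isCycle_toRestrict hW hC)

lemma exists_walk (hT : Γ.IsSpanningTree T) (u v : V) :
    ∃ W : Γ.Walk u v, ∀ e ∈ W.edges, e ∈ T :=
  let W := (hT.1.nonempty_walk u v).some
  ⟨ofRestrict W, mem_of_mem_edges_ofRestrict W⟩

lemma not_isLoop (hT : Γ.IsSpanningTree T) {e : E} (he : e ∈ T) : ¬ Γ.IsLoop e := by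
  intro hl
  have key : ∀ {x : V} (W : Γ.Walk (Γ.endpt e true) x), x = Γ.endpt e true →
      W.srcs = [Γ.endpt e true] → W.edges = [e] → False := by
    rintro x W rfl hs hW
    exact hT.isAcyclicOn _ W (by simp [hW, he]) ⟨by simp [hW], by simp [hs], by simp [hW]⟩
  exact key (cons e true (nil _)) hl.symm rfl rfl

lemma exists_fundamental_cycle (hT : Γ.IsSpanningTree T) {e : E} (he : e ∉ T) :
    ∃ p : Γ.Walk (Γ.endpt e false) (Γ.endpt e true),
      (∀ e' ∈ p.edges, e' ∈ T) ∧ Γ.IsCycle (cons e true p) := by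
  obtain ⟨W, hW⟩ := hT.exists_walk (Γ.endpt e false) (Γ.endpt e true)
  obtain ⟨p, hp, hpW⟩ := W.exists_nodup_verts
  have hpT : ∀ e' ∈ p.edges, e' ∈ T := fun e' h => hW e' (hpW e' h)
  refine ⟨p, hpT, by simp, ?_, List.nodup_cons.2 ⟨fun h => he (hpT e h),
    nodup_edges_of_nodup_verts hp⟩⟩
  rw [srcs_cons, List.nodup_cons, and_comm]
  exact nodup_verts_iff.1 hp

lemma exists_unbalanced_fundamental_cycle (hT : Γ.IsSpanningTree T) {e₀ : E} (he₀ : e₀ ∉ T)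
    (hB : ∀ (v : V) (W : (Γ.restrict (insert e₀ T)).Walk v v),
      (Γ.restrict (insert e₀ T)).IsCycle W → W.sgn = -1) :
    ∃ q : Γ.Walk (Γ.endpt e₀ false) (Γ.endpt e₀ true),
      (∀ e ∈ q.edges, e ∈ T) ∧ Γ.IsUnbalancedCycle (cons e₀ true q) := by
  obtain ⟨q, hq, hC₀⟩ := hT.exists_fundamental_cycle he₀
  have hC₀B : ∀ e ∈ (cons e₀ true q).edges, e ∈ insert e₀ T := by
    simpa using fun e he => Set.mem_insert_of_mem _ (hq e he)
  refine ⟨q, hq, hC₀, ?_⟩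
  rw [← sgn_toRestrict _ hC₀B]
  exact hB _ _ (isCycle_toRestrict hC₀B hC₀)

lemma exists_potential (hT : Γ.IsSpanningTree T) (hω : Γ.IsCompatible ω) (r : V) (f₀ : E → G)
    (c : G) : ∃ h : V → G, h r = 0 ∧ ∀ e ∈ T, (Γ.deltaHom ω G h + Γ.negTension ω c) e = f₀ e := by
  choose P hP using hT.exists_walk r
  refine ⟨walkPotential ω P (f₀ - Γ.negTension ω c),
    walkPotential_root hω hT.isAcyclicOn hP _, fun e he => ?_⟩
  rw [Pi.add_apply, deltaHom_walkPotential hω hT.isAcyclicOn hP _ he, Pi.sub_apply,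
    sub_add_cancel]

end IsSpanningTree

lemma IsCycle.exists_rotate {v : V} {C : Γ.Walk v v} (hC : Γ.IsCycle C) {z : V}
    (hz : z ∈ C.verts) : ∃ R : Γ.Walk z z, Γ.IsCycle R ∧ R.sgn = C.sgn ∧
      (∀ e, e ∈ R.edges ↔ e ∈ C.edges) ∧ ∀ x, x ∈ R.srcs ↔ x ∈ C.srcs := by
  obtain ⟨x, W₁, W₂, rfl, rfl, -⟩ := exists_eq_append_first (· = z) ⟨z, hz, rfl⟩
  have he : (W₂.append W₁).edges.Perm (W₁.append W₂).edges := by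
    simpa only [edges_append] using List.perm_append_comm
  have hs : (W₂.append W₁).srcs.Perm (W₁.append W₂).srcs := by
    simpa only [srcs_append] using List.perm_append_comm
  refine ⟨W₂.append W₁, ⟨fun h => hC.1 (by rw [h] at he; exact he.symm.eq_nil),
    hs.nodup_iff.2 hC.2.1, he.nodup_iff.2 hC.2.2⟩, by rw [sgn_append, sgn_append, mul_comm],
    fun e => he.mem_iff, fun x => hs.mem_iff⟩

lemma IsCycle.exists_arcs {a b : V} {C : Γ.Walk a a} (hC : Γ.IsCycle C) (hb : b ∈ C.srcs)
    (hab : a ≠ b) : ∃ (F₁ : Γ.Walk a b) (F₂ : Γ.Walk b a),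
      C = F₁.append F₂ ∧ F₁.verts.Nodup ∧ F₂.verts.Nodup := by
  obtain ⟨x, F₁, F₂, hCF, hxb, hF₁⟩ :=
    exists_eq_append_first (· = b) ⟨b, mem_verts_of_mem_srcs hb, rfl⟩
  subst x
  have hs := hC.2.1
  rw [hCF, srcs_append, List.nodup_append] at hs
  exact ⟨F₁, F₂, hCF, nodup_verts_iff.2 ⟨hs.1, fun h => hF₁ _ h rfl⟩, nodup_verts_iff.2
    ⟨hs.2.1, fun h => hs.2.2 a (start_mem_srcs fun h' => hab (eq_of_edges_eq_nil h')) a h rfl⟩⟩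

lemma isCycle_append_of_nodup_verts {a b : V} {P : Γ.Walk a b} {Q : Γ.Walk b a}
    (hP : P.verts.Nodup) (hQ : Q.verts.Nodup) (hab : a ≠ b)
    (hv : ∀ y ∈ P.verts, y ∈ Q.verts → y = a ∨ y = b) (hE : ∀ e ∈ P.edges, e ∉ Q.edges) :
    Γ.IsCycle (P.append Q) := by
  refine ⟨fun h => hab (eq_of_edges_eq_nil (List.append_eq_nil_iff.1 (edges_append P Q ▸ h)).1),
    ?_, ?_⟩
  · rw [srcs_append, List.nodup_append]
    refine ⟨(nodup_verts_iff.1 hP).1, (nodup_verts_iff.1 hQ).1, fun y hy y' hy' hyy' => ?_⟩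
    subst hyy'
    rcases hv y (mem_verts_of_mem_srcs hy) (mem_verts_of_mem_srcs hy') with rfl | rfl
    · exact (nodup_verts_iff.1 hQ).2 hy'
    · exact (nodup_verts_iff.1 hP).2 hy
  · rw [edges_append, List.nodup_append]
    exact ⟨nodup_edges_of_nodup_verts hP, nodup_edges_of_nodup_verts hQ,
      fun e he e' he' hee' => hE e he (hee' ▸ he')⟩

lemma Walk.edges_eq_singleton {a b : V} {W : Γ.Walk a b} (hW : W.verts.Nodup) {e : E}
    (he : e ∈ W.edges) (hend : ∀ d, Γ.endpt e d = a ∨ Γ.endpt e d = b) : W.edges = [e] := by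
  obtain ⟨d, W₁, W₂, rfl⟩ := exists_eq_append_cons_of_mem_edges he
  rw [verts_append, verts_cons] at hW
  have hx : Γ.endpt e d ∉ W₂.verts := (List.nodup_cons.1 hW.of_append_right).1
  have hxa : Γ.endpt e d = a := (hend d).resolve_right fun h => hx (h ▸ W₂.end_mem_verts)
  have hyb : Γ.endpt e (!d) = b := (hend (!d)).resolve_left fun h =>
    hx (by rw [hxa, ← h]; exact W₂.start_mem_verts)
  have h₁ : W₁.edges = [] := edges_eq_nil_of_nodup_verts W₁ hxa.symm
    (by rw [verts_eq_srcs_append]; exact hW.sublist (by simp))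
  have h₂ : W₂.edges = [] :=
    edges_eq_nil_of_nodup_verts W₂ hyb (List.nodup_cons.1 hW.of_append_right).2
  simp [edges_append, h₁, h₂]

lemma isLoop_of_mem_edges {u v c : V} {P : Γ.Walk u v} {D : Γ.Walk c c} (hD : D.edges ≠ [])
    (hmeet : ∀ y ∈ P.verts, y ∈ D.srcs → y = c) {e : E} (heP : e ∈ P.edges)
    (heD : e ∈ D.edges) : Γ.IsLoop e :=
  have h : ∀ d, Γ.endpt e d = c := fun d =>
    hmeet _ (endpt_mem_verts heP d) (mem_srcs_of_mem_verts hD (endpt_mem_verts heD d))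
  (h true).trans (h false).symm

lemma Walk.exists_ear (p : V → Prop) {u v : V} (W : Γ.Walk u v) (hu : p u) (hv : p v)
    {e : E} (he : e ∈ W.edges) :
    ∃ (a b : V) (W₁ : Γ.Walk u a) (δ : Γ.Walk a b) (W₂ : Γ.Walk b v),
      W = W₁.append (δ.append W₂) ∧ p a ∧ p b ∧ e ∈ δ.edges ∧
        ∀ y ∈ δ.srcs, p y → y = a := by
  obtain ⟨d, R₁, R₂, rfl⟩ := exists_eq_append_cons_of_mem_edges he
  obtain ⟨a, S₁, S₂, rfl, ha, hS₂⟩ := exists_eq_append_last p ⟨u, R₁.start_mem_verts, hu⟩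
  obtain ⟨b, S₃, S₄, rfl, hb, hS₃⟩ := exists_eq_append_first p ⟨v, R₂.end_mem_verts, hv⟩
  refine ⟨a, b, S₁, S₂.append (cons e d S₃), S₄, by simp [append_assoc], ha, hb,
    by simp [edges_append], fun y hy hpy => ?_⟩
  rw [srcs_append, srcs_cons, List.mem_append, List.mem_cons] at hy
  rcases hy with hy | rfl | hy
  · exact hS₂ y (mem_verts_of_mem_srcs hy) hpy
  · exact hS₂ _ S₂.end_mem_verts hpy
  · exact absurd hpy (hS₃ y hy)

lemma isCircuitWalk_of_isBasicCircuitWalk {v : V} {W : Γ.Walk v v}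
    (h : Γ.IsBasicCircuitWalk W) : Γ.IsCircuitWalk W :=
  ⟨v, W, nil v, rfl, by rwa [append_nil]⟩

namespace IsTension

variable {f : E → G} {e : E}

lemma eq_zero_of_isCircuitWalk (hf : Γ.IsTension ω f) {v : V} {W : Γ.Walk v v}
    (hW : Γ.IsCircuitWalk W) (hcount : W.edges.count e = 1)
    (h0 : ∀ e' ∈ W.edges, e' ≠ e → f e' = 0) : f e = 0 := by
  obtain ⟨d, W₁, W₂, rfl⟩ :=
    exists_eq_append_cons_of_mem_edges (List.count_pos_iff.1 (by omega : 0 < W.edges.count e))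
  rw [edges_append, edges_cons, List.count_append, List.count_cons_self] at hcount
  have he : e ∉ W₁.edges ++ W₂.edges := by
    rw [← List.count_eq_zero, List.count_append]
    omega
  have hW₁₂ : ∀ e' ∈ W₁.edges ++ W₂.edges, f e' = 0 := fun e' he' =>
    h0 e' (by simp only [edges_append, edges_cons, List.mem_append, List.mem_cons] at he' ⊢; tauto)
      fun h => he (h ▸ he')
  have h := hf v _ hW
  rw [tensionSum_append, tensionSum_cons,
    tensionSum_eq_zero fun e' he' => hW₁₂ e' (List.mem_append_left _ he'),
    tensionSum_eq_zero fun e' he' => hW₁₂ e' (List.mem_append_right _ he'), smul_zero,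
    add_zero, zero_add, smul_smul, ← Units.val_mul] at h
  exact (Units.isUnit _).smul_eq_zero.1 h

lemma eq_zero_of_isBalancedCycle (hf : Γ.IsTension ω f) {v : V} {C : Γ.Walk v v}
    (hC : Γ.IsBalancedCycle C) (he : e ∈ C.edges) (h0 : ∀ e' ∈ C.edges, e' ≠ e → f e' = 0) :
    f e = 0 :=
  hf.eq_zero_of_isCircuitWalk (isCircuitWalk_of_isBasicCircuitWalk (Or.inl hC))
    (List.count_eq_one_of_mem hC.1.2.2 he) h0

lemma eq_zero_of_isTightHandcuff (hf : Γ.IsTension ω f) {v : V} {C₁ C₂ : Γ.Walk v v}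
    (hC : Γ.IsTightHandcuff C₁ C₂) (he : e ∈ C₁.edges)
    (h₁ : ∀ e' ∈ C₁.edges, e' ≠ e → f e' = 0) (h₂ : ∀ e' ∈ C₂.edges, f e' = 0) : f e = 0 := by
  refine hf.eq_zero_of_isCircuitWalk
    (isCircuitWalk_of_isBasicCircuitWalk (Or.inr (Or.inl ⟨C₁, C₂, hC, rfl⟩))) ?_ ?_
  · rw [edges_append, List.count_append, List.count_eq_one_of_mem hC.1.1.2.2 he,
      List.count_eq_zero_of_not_mem (hC.2.2.2 e he)]
  · intro e' he' hne
    rw [edges_append, List.mem_append] at he'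
    exact he'.elim (h₁ e' · hne) (h₂ e')

lemma eq_zero_of_isLooseHandcuff (hf : Γ.IsTension ω f) {u w : V} {C₁ : Γ.Walk u u}
    {P : Γ.Walk u w} {C₂ : Γ.Walk w w} (hC : Γ.IsLooseHandcuff C₁ P C₂) (he : e ∈ C₁.edges)
    (h₁ : ∀ e' ∈ C₁.edges, e' ≠ e → f e' = 0) (hP : ∀ e' ∈ P.edges, f e' = 0)
    (h₂ : ∀ e' ∈ C₂.edges, f e' = 0) : f e = 0 := by
  by_cases he₂ : e ∈ C₂.edges
  · exact h₂ e he₂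
  have heP : e ∉ P.edges := fun h => (hC.2.2.2.2.2.2 e h).1 he
  refine hf.eq_zero_of_isCircuitWalk (isCircuitWalk_of_isBasicCircuitWalk
    (Or.inr (Or.inr ⟨w, C₁, P, C₂, P.reverse, hC, isReverseOf_reverse P, rfl⟩))) ?_ ?_
  · simp [edges_append, edges_reverse, List.count_eq_one_of_mem hC.1.1.2.2 he,
      List.count_eq_zero_of_not_mem heP, List.count_eq_zero_of_not_mem he₂]
  · intro e' he' hne
    simp only [edges_append, edges_reverse, List.mem_append, List.mem_reverse] at he'
    rcases he' with h | h | h | h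
    exacts [h₁ e' h hne, hP e' h, h₂ e' h, hP e' h]

lemma eq_zero_of_closed_ear (hf : Γ.IsTension ω f) {a : V} {δ C₀ : Γ.Walk a a}
    (hδ : Γ.IsCycle δ) (he : e ∈ δ.edges)
    (hδ0 : ∀ e' ∈ δ.edges, e' ≠ e → f e' = 0 ∧ ¬ Γ.IsLoop e')
    (hC₀ : Γ.IsUnbalancedCycle C₀) (hC₀0 : ∀ e' ∈ C₀.edges, f e' = 0) (heC₀ : e ∉ C₀.edges)
    (hmeet : ∀ y ∈ δ.verts, y ∈ C₀.srcs → y = a) : f e = 0 := by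
  rcases Int.units_eq_one_or δ.sgn with hs | hs
  · exact hf.eq_zero_of_isBalancedCycle ⟨hδ, hs⟩ he fun e' he' hne => (hδ0 e' he' hne).1
  refine hf.eq_zero_of_isTightHandcuff ⟨⟨hδ, hs⟩, hC₀,
    fun y hy => hmeet y (mem_verts_of_mem_srcs hy), fun e' he' he'₀ => ?_⟩ he
    (fun e' he' hne => (hδ0 e' he' hne).1) hC₀0
  exact (hδ0 e' he' fun h => heC₀ (h ▸ he'₀)).2 (isLoop_of_mem_edges hC₀.1.1 hmeet he' he'₀)

lemma eq_zero_of_open_ear (hf : Γ.IsTension ω f) {a b : V} {δ : Γ.Walk a b} {C₀ : Γ.Walk a a}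
    (hδ : δ.verts.Nodup) (he : e ∈ δ.edges) (hδ0 : ∀ e' ∈ δ.edges, e' ≠ e → f e' = 0)
    (hC₀ : Γ.IsUnbalancedCycle C₀) (hC₀0 : ∀ e' ∈ C₀.edges, f e' = 0) (heC₀ : e ∉ C₀.edges)
    (hb : b ∈ C₀.srcs) (hmeet : ∀ y ∈ δ.srcs, y ∈ C₀.srcs → y = a) : f e = 0 := by
  have hab : a ≠ b := by
    rintro rfl
    simp [edges_eq_nil_of_nodup_verts δ rfl hδ] at he
  obtain ⟨F₁, F₂, hC₀F, hF₁v, hF₂v⟩ := hC₀.1.exists_arcs hb hab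
  have hδC₀ : ∀ y ∈ δ.verts, y ∈ C₀.verts → y = a ∨ y = b := fun y hy hy₀ => by
    rw [verts_eq_srcs_append, List.mem_append, List.mem_singleton] at hy
    exact hy.imp_left (hmeet y · (mem_srcs_of_mem_verts hC₀.1.1 hy₀))
  have hE : ∀ e' ∈ δ.edges, e' ∉ C₀.edges := fun e' he' he'₀ => by
    have h := edges_eq_singleton hδ he' fun d =>
      hδC₀ _ (endpt_mem_verts he' d) (endpt_mem_verts he'₀ d)
    rw [h, List.mem_singleton] at he
    exact heC₀ (he ▸ he'₀)
  have hsgn : F₁.sgn * F₂.sgn = -1 := by rw [← sgn_append, ← hC₀F]; exact hC₀.2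
  have hF₁C₀ : ∀ e' ∈ F₁.edges, e' ∈ C₀.edges := fun e' h => by simp [hC₀F, edges_append, h]
  have hF₂C₀ : ∀ e' ∈ F₂.edges, e' ∈ C₀.edges := fun e' h => by simp [hC₀F, edges_append, h]
  -- the arcs `F₁` and `F₂` of `C₀` have opposite signs, so one of them closes `δ` into a
  -- balanced cycle
  rcases Int.units_eq_one_or (δ.sgn * F₂.sgn) with h | h
  · refine hf.eq_zero_of_isBalancedCycle ⟨isCycle_append_of_nodup_verts hδ hF₂v hab
      (fun y hy hy₂ => hδC₀ y hy (hC₀F ▸ mem_verts_append_right hy₂))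
      (fun e' he' h₂ => hE e' he' (hF₂C₀ e' h₂)), by rw [sgn_append, h]⟩
      (by simp [edges_append, he]) fun e' he' hne => ?_
    rw [edges_append, List.mem_append] at he'
    exact he'.elim (hδ0 e' · hne) fun h₂ => hC₀0 e' (hF₂C₀ e' h₂)
  · have h' : F₁.sgn * δ.reverse.sgn = 1 := calc
      _ = (F₁.sgn * F₂.sgn) * (δ.sgn * F₂.sgn) := by
        rw [(isReverseOf_reverse δ).sgn_eq, mul_mul_mul_comm, Int.units_mul_self, mul_one]
      _ = 1 := by rw [hsgn, h]; rfl
    refine hf.eq_zero_of_isBalancedCycle ⟨isCycle_append_of_nodup_verts hF₁v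
      (by rw [verts_reverse]; exact List.nodup_reverse.2 hδ) hab
      (fun y hy₁ hy => by
        rw [verts_reverse, List.mem_reverse] at hy
        exact hδC₀ y hy (hC₀F ▸ mem_verts_append_left hy₁))
      (fun e' h₁ he' => by
        rw [edges_reverse, List.mem_reverse] at he'
        exact hE e' he' (hF₁C₀ e' h₁)), by rw [sgn_append, h']⟩
      (by simp [edges_append, edges_reverse, he]) fun e' he' hne => ?_
    rw [edges_append, edges_reverse, List.mem_append, List.mem_reverse] at he'
    exact he'.elim (fun h₁ => hC₀0 e' (hF₁C₀ e' h₁)) (hδ0 e' · hne)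

lemma eq_zero_of_cycle_meeting (hf : Γ.IsTension ω f) {z w x : V} {C : Γ.Walk z z}
    {C₀ : Γ.Walk w w} (hC : Γ.IsCycle C) (he : e ∈ C.edges)
    (hC0 : ∀ e' ∈ C.edges, e' ≠ e → f e' = 0 ∧ ¬ Γ.IsLoop e') (hC₀ : Γ.IsUnbalancedCycle C₀)
    (hC₀0 : ∀ e' ∈ C₀.edges, f e' = 0) (heC₀ : e ∉ C₀.edges) (hxC : x ∈ C.srcs)
    (hxC₀ : x ∈ C₀.srcs) : f e = 0 := by
  obtain ⟨R, hR, -, hRe, -⟩ := hC.exists_rotate (mem_verts_of_mem_srcs hxC)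
  obtain ⟨a, b, W₁, δ, W₂, hRδ, ha, hb, heδ, hδ⟩ :=
    exists_ear (· ∈ C₀.srcs) R hxC₀ hxC₀ ((hRe e).2 he)
  obtain ⟨C₁, hC₁, hs₁, hC₁e, hC₁s⟩ := hC₀.1.exists_rotate (mem_verts_of_mem_srcs ha)
  have hsrcs := hR.2.1
  have hedges := hR.2.2
  rw [hRδ, srcs_append, srcs_append] at hsrcs
  rw [hRδ, edges_append, edges_append] at hedges
  have hδC : ∀ e' ∈ δ.edges, e' ≠ e → f e' = 0 ∧ ¬ Γ.IsLoop e' := fun e' he' =>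
    hC0 e' ((hRe e').1 (by simp [hRδ, edges_append, he']))
  have hC₁0 : ∀ e' ∈ C₁.edges, f e' = 0 := fun e' h => hC₀0 e' ((hC₁e e').1 h)
  have heC₁ : e ∉ C₁.edges := fun h => heC₀ ((hC₁e e).1 h)
  have hmeet : ∀ y ∈ δ.srcs, y ∈ C₁.srcs → y = a := fun y hy hy₁ => hδ y hy ((hC₁s y).1 hy₁)
  by_cases hab : a = b
  · subst hab
    refine hf.eq_zero_of_closed_ear ⟨List.ne_nil_of_mem heδ,
      hsrcs.of_append_right.of_append_left, hedges.of_append_right.of_append_left⟩ heδ hδC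
      ⟨hC₁, hs₁.trans hC₀.2⟩ hC₁0 heC₁ fun y hy hy₁ => ?_
    rw [verts_eq_srcs_append, List.mem_append, List.mem_singleton] at hy
    exact hy.elim (hmeet y · hy₁) id
  · exact hf.eq_zero_of_open_ear (nodup_verts_iff.2 ⟨hsrcs.of_append_right.of_append_left,
      fun h => hab (hδ b h hb).symm⟩) heδ (fun e' he' hne => (hδC e' he' hne).1)
      ⟨hC₁, hs₁.trans hC₀.2⟩ hC₁0 heC₁ ((hC₁s b).2 hb) hmeet

lemma eq_zero_of_disjoint_cycles (hf : Γ.IsTension ω f) {z w x y : V} {C : Γ.Walk z z}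
    {C₀ : Γ.Walk w w} (hC : Γ.IsUnbalancedCycle C) (he : e ∈ C.edges)
    (hC0 : ∀ e' ∈ C.edges, e' ≠ e → f e' = 0) (hC₀ : Γ.IsUnbalancedCycle C₀)
    (hC₀0 : ∀ e' ∈ C₀.edges, f e' = 0) (hdisj : ∀ v ∈ C.srcs, v ∉ C₀.srcs)
    (m : Γ.Walk x y) (hx : x ∈ C.srcs) (hy : y ∈ C₀.srcs)
    (hm : ∀ e' ∈ m.edges, f e' = 0 ∧ ¬ Γ.IsLoop e') : f e = 0 := by
  obtain ⟨m', hm'v, hm'm⟩ := m.exists_nodup_verts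
  obtain ⟨a, m₁, m₂, rfl, ha, hm₂⟩ :=
    exists_eq_append_last (· ∈ C.srcs) ⟨x, m'.start_mem_verts, hx⟩
  obtain ⟨b, P, m₃, rfl, hb, hP⟩ :=
    exists_eq_append_first (· ∈ C₀.srcs) ⟨y, m₂.end_mem_verts, hy⟩
  have hPv : P.verts.Nodup := by
    rw [verts_append, verts_append] at hm'v
    rw [verts_eq_srcs_append]
    exact hm'v.of_append_right.sublist
      ((List.singleton_sublist.2 m₃.start_mem_verts).append_left _)
  have hPm : ∀ e' ∈ P.edges, f e' = 0 ∧ ¬ Γ.IsLoop e' := fun e' h =>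
    hm e' (hm'm e' (by simp [edges_append, h]))
  obtain ⟨C₁, hC₁, hs₁, hC₁e, hC₁s⟩ := hC.1.exists_rotate (mem_verts_of_mem_srcs ha)
  obtain ⟨C₂, hC₂, hs₂, hC₂e, hC₂s⟩ := hC₀.1.exists_rotate (mem_verts_of_mem_srcs hb)
  have hPC₁ : ∀ v ∈ P.verts, v ∈ C₁.srcs → v = a := fun v hv h₁ =>
    hm₂ v (mem_verts_append_left hv) ((hC₁s v).1 h₁)
  have hPC₂ : ∀ v ∈ P.verts, v ∈ C₂.srcs → v = b := fun v hv h₂ => by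
    rw [verts_eq_srcs_append, List.mem_append, List.mem_singleton] at hv
    exact hv.resolve_left fun h => hP v h ((hC₂s v).1 h₂)
  refine hf.eq_zero_of_isLooseHandcuff (C₁ := C₁) (P := P) (C₂ := C₂)
    ⟨⟨hC₁, hs₁.trans hC.2⟩, ⟨hC₂, hs₂.trans hC₀.2⟩,
      ⟨fun h => hdisj a ha (eq_of_edges_eq_nil h ▸ hb), hPv⟩,
      fun v h₁ h₂ => hdisj v ((hC₁s v).1 h₁) ((hC₂s v).1 h₂), hPC₁, hPC₂, fun e' he' =>
      ⟨fun h => (hPm e' he').2 (isLoop_of_mem_edges hC₁.1 hPC₁ he' h),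
        fun h => (hPm e' he').2 (isLoop_of_mem_edges hC₂.1 hPC₂ he' h)⟩⟩
    ((hC₁e e).2 he) (fun e' h hne => hC0 e' ((hC₁e e').1 h) hne) (fun e' h => (hPm e' h).1)
    (fun e' h => hC₀0 e' ((hC₂e e').1 h))

lemma eq_zero_of_isConnectedBasis (hf : Γ.IsTension ω f) {B : Set E}
    (hB : Γ.IsConnectedBasis B) (h0 : ∀ e ∈ B, f e = 0) (e : E) : f e = 0 := by
  by_cases heB : e ∈ B
  · exact h0 e heB
  rcases hB with ⟨hbal, hT⟩ | ⟨-, T, e₀, hT, he₀, rfl, hUB⟩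
  · obtain ⟨p, hp, hC⟩ := hT.exists_fundamental_cycle heB
    exact hf.eq_zero_of_isBalancedCycle ⟨hC, hbal _ _ hC⟩ (by simp) fun e' he' hne =>
      h0 e' (hp e' (by simpa [hne] using he'))
  have heT : e ∉ T := fun h => heB (Set.mem_insert_of_mem _ h)
  obtain ⟨p, hp, hC⟩ := hT.exists_fundamental_cycle heT
  have hCT : ∀ e' ∈ (cons e true p).edges, e' ≠ e → e' ∈ T := fun e' he' hne =>
    hp e' (by simpa [hne] using he')
  have hC0 : ∀ e' ∈ (cons e true p).edges, e' ≠ e → f e' = 0 := fun e' he' hne =>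
    h0 e' (Set.mem_insert_of_mem _ (hCT e' he' hne))
  rcases Int.units_eq_one_or (cons e true p).sgn with hs | hs
  · exact hf.eq_zero_of_isBalancedCycle ⟨hC, hs⟩ (by simp) hC0
  obtain ⟨q, hq, hC₀⟩ := hT.exists_unbalanced_fundamental_cycle he₀ hUB
  have hC₀B : ∀ e' ∈ (cons e₀ true q).edges, e' ∈ insert e₀ T := by
    simpa using fun e' he' => Set.mem_insert_of_mem _ (hq e' he')
  have hC₀0 : ∀ e' ∈ (cons e₀ true q).edges, f e' = 0 := fun e' he' => h0 e' (hC₀B e' he')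
  by_cases hmeet : ∃ x ∈ (cons e true p).srcs, x ∈ (cons e₀ true q).srcs
  · obtain ⟨x, hx, hx₀⟩ := hmeet
    exact hf.eq_zero_of_cycle_meeting hC (by simp)
      (fun e' he' hne => ⟨hC0 e' he' hne, hT.not_isLoop (hCT e' he' hne)⟩) hC₀ hC₀0
      (fun h => heB (hC₀B e h)) hx hx₀
  · push Not at hmeet
    obtain ⟨m, hm⟩ := hT.exists_walk (Γ.endpt e true) (Γ.endpt e₀ true)
    exact hf.eq_zero_of_disjoint_cycles ⟨hC, hs⟩ (by simp) hC0 hC₀ hC₀0 hmeet m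
      (by simp) (by simp) fun e' he' =>
        ⟨h0 e' (Set.mem_insert_of_mem _ (hm e' he')), hT.not_isLoop (hm e' he')⟩

end IsTension

lemma exists_isTension_eqOn_isConnectedBasis (hω : Γ.IsCompatible ω) {B : Set E}
    (hB : Γ.IsConnectedBasis B) (f₀ : E → G) :
    ∃ f : E → G, Γ.IsTension ω f ∧ ∀ e ∈ B, f e = f₀ e := by
  rcases hB with ⟨-, hT⟩ | ⟨-, T, e₀, hT, he₀, rfl, hUB⟩
  · obtain ⟨r⟩ := hT.1.nonempty
    obtain ⟨h, -, hT'⟩ := hT.exists_potential hω r f₀ 0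
    exact ⟨_, isTension_deltaHom_add_negTension hω h 0, hT'⟩
  obtain ⟨q, hq, hC₀⟩ := hT.exists_unbalanced_fundamental_cycle he₀ hUB
  -- the sum around `cons e₀ true q` of any tension agreeing with `f₀` on `insert e₀ T`
  set c : G := (ω e₀ true : ℤ) • f₀ e₀ + (Γ.sign e₀ : ℤ) • q.tensionSum ω f₀
  obtain ⟨h, hr, hT'⟩ := hT.exists_potential hω (Γ.endpt e₀ true) f₀ c
  refine ⟨_, isTension_deltaHom_add_negTension hω h c, ?_⟩
  rintro e (rfl | he)
  · have hsum : (cons e true q).tensionSum ω (Γ.deltaHom ω G h + Γ.negTension ω c) = c := by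
      rw [tensionSum_add, tensionSum_deltaHom hω, tensionSum_negTension hω, hC₀.2, hr]
      simp
    rw [tensionSum_cons, tensionSum_congr fun e' he' => hT' e' (hq e' he')] at hsum
    exact (Units.isUnit _).smul_left_cancel.1 (add_right_cancel hsum)
  · exact hT' e he

end SGraph

section Statement

open SGraph

theorem tension_restriction_to_connected_basis_bijective_general
    (V E : Type)
    (Γ : SGraph V E)
    (ω : E → Bool → ℤˣ) (hω : Γ.IsCompatible ω)
    (G : Type) [AddCommGroup G]
    (B : Set E) (hB : Γ.IsConnectedBasis B) :
    Function.Bijective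
      (fun f : {f : E → G // Γ.IsTension ω f} => fun b : B => (f : E → G) b) := by
  refine ⟨fun f₁ f₂ h => Subtype.ext (funext fun e => sub_eq_zero.1 ?_), fun b => ?_⟩
  · exact (f₁.2.sub f₂.2).eq_zero_of_isConnectedBasis hB
      (fun e he => sub_eq_zero.2 (congrFun h ⟨e, he⟩)) e
  · obtain ⟨f, hf, hfB⟩ := exists_isTension_eqOn_isConnectedBasis hω hB
      fun e => if h : e ∈ B then b ⟨e, h⟩ else 0
    exact ⟨⟨f, hf⟩, funext fun e => by simp [hfB e e.2]⟩

/-- Lemma 7.9: a `G`-tension of a connected signed graph is uniquely determined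
by its values on a connected basis; indeed restriction to the basis is a
bijection onto all `G`-valued functions on the basis. -/
theorem tension_restriction_to_connected_basis_bijective
    (V E : Type) [Finite V] [Finite E]
    (Γ : SGraph V E) (hconn : Γ.Connected)
    (ω : E → Bool → ℤˣ) (hω : Γ.IsCompatible ω)
    (G : Type) [AddCommGroup G] [Finite G]
    (B : Set E) (hB : Γ.IsConnectedBasis B) :
    Function.Bijective
      (fun f : {f : E → G // Γ.IsTension ω f} => fun b : B => (f : E → G) b) :=
  tension_restriction_to_connected_basis_bijective_general V E Γ ω hω G B hB

end Statement
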